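/- arXiv:2510.02948 — 3 statements merged into one kernel-verified Lean document; each statement's English description precedes it below -/
import Mathlib

section
/- Let Q be a symmetric n×n real matrix, d ∈ ℝⁿ, A ∈ ℝ^{m×n}, b ∈ ℝᵐ, and let x̄ be a KKT point of the QP. Let ν_R ∈ ℝ and c ∈ ℝⁿ. Suppose there exist a positive semidefinite S ∈ 𝒮^{n+1}, an entrywise nonnegative T₁ ∈ ℝ^{(m+1)×(m+1)} and β ≥ 0 such that [Q, d; dᵀ, −ν_R] = S + B₁ᵀ T₁ B₁ + ½ u vᵀ + ½ v uᵀ, where B₁ = [−A, b; 0ᵀ, 1] ∈ ℝ^{(m+1)×(n+1)}, u = (Qx̄ + d; −x̄ᵀQx̄ − dᵀx̄ + β) ∈ ℝ^{n+1} and v = (−c; 1 + cᵀx̄) ∈ ℝ^{n+1}. Then for every x ∈ ℝⁿ with Ax ≤ b and cᵀ(x − x̄) ≤ 1 one has xᵀQx + 2dᵀx ≥ ν_R. -/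
open Matrix

/-- The `(n+1) × (n+1)` symmetric matrix `[Q, d; dᵀ, −ν]`. -/
noncomputable def objMat {n : ℕ} (Q : Matrix (Fin n) (Fin n) ℝ) (d : Fin n → ℝ)
    (ν : ℝ) : Matrix (Fin n ⊕ Unit) (Fin n ⊕ Unit) ℝ :=
  Matrix.of fun i j =>
    match i, j with
    | Sum.inl i, Sum.inl j => Q i j
    | Sum.inl i, Sum.inr _ => d i
    | Sum.inr _, Sum.inl j => d j
    | Sum.inr _, Sum.inr _ => -ν

/-- The `(m+1) × (n+1)` block matrix `B₁ = [−A, b; 0ᵀ, 1]`. -/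
noncomputable def feasMat {n m : ℕ} (A : Matrix (Fin m) (Fin n) ℝ) (b : Fin m → ℝ) :
    Matrix (Fin m ⊕ Unit) (Fin n ⊕ Unit) ℝ :=
  Matrix.of fun i j =>
    match i, j with
    | Sum.inl i, Sum.inl j => -A i j
    | Sum.inl i, Sum.inr _ => b i
    | Sum.inr _, Sum.inl _ => 0
    | Sum.inr _, Sum.inr _ => 1

/-- The vector `u = (Qx̄ + d; −x̄ᵀQx̄ − dᵀx̄ + β) ∈ ℝ^{n+1}`. -/
noncomputable def uVec {n : ℕ} (Q : Matrix (Fin n) (Fin n) ℝ) (d xbar : Fin n → ℝ)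
    (β : ℝ) : Fin n ⊕ Unit → ℝ :=
  Sum.elim (Q *ᵥ xbar + d) (fun _ => -(xbar ⬝ᵥ (Q *ᵥ xbar)) - d ⬝ᵥ xbar + β)

/-- The vector `v = (−c; 1 + cᵀx̄) ∈ ℝ^{n+1}`. -/
noncomputable def vVec {n : ℕ} (c xbar : Fin n → ℝ) : Fin n ⊕ Unit → ℝ :=
  Sum.elim (-c) (fun _ => 1 + c ⬝ᵥ xbar)

/-!
Evaluate the decomposition as a quadratic form at the homogenized point `z = (x; 1)`. The left
side gives `Φ(x) - ν_R`. On the right, `zᵀSz ≥ 0`; `B₁z = (b - Ax; 1)` is entrywise nonnegative,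
so `zᵀB₁ᵀT₁B₁z ≥ 0`; and the rank-two part contributes `(zᵀu)(zᵀv)`, where
`zᵀu = (Qx̄ + d)ᵀ(x - x̄) + β ≥ 0` by the KKT conditions and `zᵀv = 1 - cᵀ(x - x̄) ≥ 0` by the cut.
-/

section QuadraticForm

variable {ι κ R : Type*} [Fintype ι] [Fintype κ]

theorem dotProduct_vecMulVec_mulVec [CommSemiring R] (u v z : ι → R) :
    z ⬝ᵥ (vecMulVec u v *ᵥ z) = (z ⬝ᵥ u) * (z ⬝ᵥ v) := by
  rw [vecMulVec_mulVec, op_smul_eq_smul, dotProduct_smul, smul_eq_mul, mul_comm,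
    dotProduct_comm v]

theorem dotProduct_mulVec_nonneg_of_nonneg [CommSemiring R] [PartialOrder R] [IsOrderedRing R]
    {T : Matrix κ κ R} (hT : ∀ i j, 0 ≤ T i j) {w : κ → R} (hw : 0 ≤ w) :
    0 ≤ w ⬝ᵥ (T *ᵥ w) :=
  Finset.sum_nonneg fun i _ =>
    mul_nonneg (hw i) (Finset.sum_nonneg fun j _ => mul_nonneg (hT i j) (hw j))

theorem dotProduct_transpose_mul_mul_mulVec [CommSemiring R] (B : Matrix κ ι R)
    (T : Matrix κ κ R) (z : ι → R) :
    z ⬝ᵥ ((Bᵀ * T * B) *ᵥ z) = (B *ᵥ z) ⬝ᵥ (T *ᵥ (B *ᵥ z)) := by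
  rw [← mulVec_mulVec, ← mulVec_mulVec, dotProduct_mulVec, vecMul_transpose]

end QuadraticForm

theorem sub_dotProduct_nonneg_of_kkt {ι κ : Type*} [Fintype ι] [Fintype κ]
    {A : Matrix κ ι ℝ} {b lam : κ → ℝ} {xbar g : ι → ℝ} (hlam : 0 ≤ lam)
    (hstat : g = -(Aᵀ *ᵥ lam)) (hcs : (A *ᵥ xbar - b) ⬝ᵥ lam = 0) {x : ι → ℝ}
    (hx : A *ᵥ x ≤ b) : 0 ≤ (x - xbar) ⬝ᵥ g := by
  have hslack : 0 ≤ (b - A *ᵥ x) ⬝ᵥ lam := dotProduct_nonneg_of_nonneg (sub_nonneg.2 hx) hlam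
  calc 0 ≤ (b - A *ᵥ x) ⬝ᵥ lam + (A *ᵥ xbar - b) ⬝ᵥ lam := by rwa [hcs, add_zero]
    _ = (x - xbar) ⬝ᵥ g := by
      rw [hstat, dotProduct_neg, dotProduct_mulVec, vecMul_transpose, ← add_dotProduct,
        mulVec_sub, ← neg_dotProduct]
      congr 1
      abel

theorem dotProduct_unit {R : Type*} [Mul R] [AddCommMonoid R] (a b : R) :
    ((fun _ => a : Unit → R) ⬝ᵥ fun _ => b) = a * b :=
  Fintype.sum_unique _

def homog {ι : Type*} (x : ι → ℝ) : ι ⊕ Unit → ℝ :=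
  Sum.elim x fun _ => 1

theorem objMat_mulVec_homog {n : ℕ} (Q : Matrix (Fin n) (Fin n) ℝ) (d : Fin n → ℝ) (ν : ℝ)
    (x : Fin n → ℝ) : objMat Q d ν *ᵥ homog x = Sum.elim (Q *ᵥ x + d) fun _ => d ⬝ᵥ x - ν := by
  ext (i | i) <;>
    simp [homog, objMat, mulVec, dotProduct, Fintype.sum_sum_type, sub_eq_add_neg, mul_comm]

theorem homog_dotProduct_objMat_mulVec {n : ℕ} (Q : Matrix (Fin n) (Fin n) ℝ) (d : Fin n → ℝ)
    (ν : ℝ) (x : Fin n → ℝ) :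
    homog x ⬝ᵥ (objMat Q d ν *ᵥ homog x) = x ⬝ᵥ (Q *ᵥ x) + 2 * (d ⬝ᵥ x) - ν := by
  rw [objMat_mulVec_homog, homog, sumElim_dotProduct_sumElim, dotProduct_add, dotProduct_comm x d,
    dotProduct_unit, one_mul]
  ring

theorem feasMat_mulVec_homog {n m : ℕ} (A : Matrix (Fin m) (Fin n) ℝ) (b : Fin m → ℝ)
    (x : Fin n → ℝ) : feasMat A b *ᵥ homog x = Sum.elim (b - A *ᵥ x) fun _ => 1 := by
  ext (i | i) <;>
    simp [homog, feasMat, mulVec, dotProduct, Fintype.sum_sum_type, sub_eq_neg_add]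

theorem feasMat_mulVec_homog_nonneg {n m : ℕ} {A : Matrix (Fin m) (Fin n) ℝ} {b : Fin m → ℝ}
    {x : Fin n → ℝ} (hx : A *ᵥ x ≤ b) : 0 ≤ feasMat A b *ᵥ homog x := by
  rw [feasMat_mulVec_homog]
  rintro (i | i)
  · exact sub_nonneg.2 (hx i)
  · exact zero_le_one

theorem homog_dotProduct_uVec {n : ℕ} (Q : Matrix (Fin n) (Fin n) ℝ) (d xbar : Fin n → ℝ)
    (β : ℝ) (x : Fin n → ℝ) :
    homog x ⬝ᵥ uVec Q d xbar β = (x - xbar) ⬝ᵥ (Q *ᵥ xbar + d) + β := by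
  rw [homog, uVec, sumElim_dotProduct_sumElim, sub_dotProduct, dotProduct_add xbar,
    dotProduct_comm xbar d, dotProduct_unit, one_mul]
  ring

theorem homog_dotProduct_vVec {n : ℕ} (c xbar x : Fin n → ℝ) :
    homog x ⬝ᵥ vVec c xbar = 1 - c ⬝ᵥ (x - xbar) := by
  rw [homog, vVec, sumElim_dotProduct_sumElim, dotProduct_neg, dotProduct_sub, dotProduct_comm x c,
    dotProduct_unit, one_mul]
  ring

theorem valid_cut_of_reduced_SOS_general {n m : ℕ} (Q : Matrix (Fin n) (Fin n) ℝ)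
    (d : Fin n → ℝ) (A : Matrix (Fin m) (Fin n) ℝ) (b : Fin m → ℝ)
    (xbar : Fin n → ℝ)
    (lam : Fin m → ℝ) (hlam : 0 ≤ lam)
    (hstat : Q *ᵥ xbar + d = -(Aᵀ *ᵥ lam))
    (hcs : (A *ᵥ xbar - b) ⬝ᵥ lam = 0)
    (νR : ℝ) (c : Fin n → ℝ) (β : ℝ) (hβ : 0 ≤ β)
    (S : Matrix (Fin n ⊕ Unit) (Fin n ⊕ Unit) ℝ)
    (T₁ : Matrix (Fin m ⊕ Unit) (Fin m ⊕ Unit) ℝ)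
    (hS : S.PosSemidef) (hT₁ : ∀ i j, 0 ≤ T₁ i j)
    (hdecomp : objMat Q d νR =
      S + (feasMat A b)ᵀ * T₁ * feasMat A b +
        (1 / 2 : ℝ) • (vecMulVec (uVec Q d xbar β) (vVec c xbar)) +
        (1 / 2 : ℝ) • (vecMulVec (vVec c xbar) (uVec Q d xbar β))) :
    ∀ x : Fin n → ℝ, A *ᵥ x ≤ b → c ⬝ᵥ (x - xbar) ≤ 1 →
      νR ≤ x ⬝ᵥ (Q *ᵥ x) + 2 * (d ⬝ᵥ x) := by
  intro x hx hcx
  have key := congrArg (fun M => homog x ⬝ᵥ (M *ᵥ homog x)) hdecomp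
  simp only [add_mulVec, dotProduct_add, smul_mulVec, dotProduct_smul, smul_eq_mul,
    dotProduct_vecMulVec_mulVec, dotProduct_transpose_mul_mul_mulVec,
    homog_dotProduct_objMat_mulVec] at key
  have hSz : 0 ≤ homog x ⬝ᵥ (S *ᵥ homog x) := hS.dotProduct_mulVec_nonneg (homog x)
  have hTz := dotProduct_mulVec_nonneg_of_nonneg hT₁ (feasMat_mulVec_homog_nonneg hx)
  have hu : 0 ≤ homog x ⬝ᵥ uVec Q d xbar β := by
    rw [homog_dotProduct_uVec]
    linarith [sub_dotProduct_nonneg_of_kkt hlam hstat hcs hx]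
  have hv : 0 ≤ homog x ⬝ᵥ vVec c xbar := by
    rw [homog_dotProduct_vVec]
    linarith
  rw [mul_comm (homog x ⬝ᵥ vVec c xbar)] at key
  linarith [mul_nonneg hu hv]

/-- Lemma `l:csdp`. Let `x̄` be a KKT point of the QP. If
`[Q, d; dᵀ, −ν_R] = S + B₁ᵀ T₁ B₁ + ½uvᵀ + ½vuᵀ` with `S ⪰ 0`, `T₁ ≥ 0` entrywise
and `β ≥ 0`, then `c` is a valid cut. -/
theorem valid_cut_of_reduced_SOS {n m : ℕ} (Q : Matrix (Fin n) (Fin n) ℝ)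
    (hQ : Q.IsSymm) (d : Fin n → ℝ) (A : Matrix (Fin m) (Fin n) ℝ) (b : Fin m → ℝ)
    (xbar : Fin n → ℝ) (hfeas : A *ᵥ xbar ≤ b)
    (lam : Fin m → ℝ) (hlam : 0 ≤ lam)
    (hstat : Q *ᵥ xbar + d = -(Aᵀ *ᵥ lam))
    (hcs : (A *ᵥ xbar - b) ⬝ᵥ lam = 0)
    (νR : ℝ) (c : Fin n → ℝ) (β : ℝ) (hβ : 0 ≤ β)
    (S : Matrix (Fin n ⊕ Unit) (Fin n ⊕ Unit) ℝ)
    (T₁ : Matrix (Fin m ⊕ Unit) (Fin m ⊕ Unit) ℝ)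
    (hS : S.PosSemidef) (hT₁ : ∀ i j, 0 ≤ T₁ i j)
    (hdecomp : objMat Q d νR =
      S + (feasMat A b)ᵀ * T₁ * feasMat A b +
        (1 / 2 : ℝ) • (vecMulVec (uVec Q d xbar β) (vVec c xbar)) +
        (1 / 2 : ℝ) • (vecMulVec (vVec c xbar) (uVec Q d xbar β))) :
    ∀ x : Fin n → ℝ, A *ᵥ x ≤ b → c ⬝ᵥ (x - xbar) ≤ 1 →
      νR ≤ x ⬝ᵥ (Q *ᵥ x) + 2 * (d ⬝ᵥ x) :=
  valid_cut_of_reduced_SOS_general Q d A b xbar lam hlam hstat hcs νR c β hβ S T₁ hS hT₁ hdecomp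
end

section
/- Let Q be a symmetric n×n real matrix, d ∈ ℝⁿ, A ∈ ℝ^{m×n}, b ∈ ℝᵐ. A point x̄ ∈ ℝⁿ is a locally unique solution of the QP (i.e. x̄ ∈ F and there exists ε > 0 such that Φ(x̄) < Φ(x) for all x ∈ F with ‖x − x̄‖ < ε and x ≠ x̄) if and only if x̄ ∈ F and there exists λ̄ ∈ ℝᵐ with λ̄ ≥ 0, Qx̄ + d = −Aᵀλ̄, (Ax̄ − b)ᵀλ̄ = 0, and pᵀQp > 0 for every nonzero p ∈ ℝⁿ satisfying a_iᵀp = 0 for all i with λ̄_i > 0 and a_iᵀp ≤ 0 for all i ∈ I_{x̄}. -/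
open Matrix

/-- The objective `Φ(x) = xᵀQx + 2dᵀx`. -/
noncomputable def Phi {n : ℕ} (Q : Matrix (Fin n) (Fin n) ℝ) (d : Fin n → ℝ)
    (x : Fin n → ℝ) : ℝ :=
  x ⬝ᵥ (Q *ᵥ x) + 2 * (d ⬝ᵥ x)

/-!
Along a direction `p` the objective expands as
`Φ(x̄ + t p) = Φ(x̄) + t (2 pᵀ(Qx̄ + d) + t pᵀQp)`. Hence `x̄` is a locally unique solution iff,
for every nonzero feasible direction `p`, the linear term `pᵀ(Qx̄ + d)` is nonnegative, and
`pᵀQp > 0` whenever it vanishes: necessity by letting `t → 0⁺`, sufficiency because the feasible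
directions of unit norm form a compact set, on which these two conditions give a uniform
lower bound for small `t`.

Nonnegativity of `pᵀ(Qx̄ + d)` on the cone of feasible directions is, by Farkas' lemma, the
existence of a multiplier `λ̄ ≥ 0` supported on the active constraints with
`Qx̄ + d = -Aᵀλ̄`. Then `pᵀ(Qx̄ + d) = -(Ap)ᵀλ̄` vanishes on that cone exactly when `a_iᵀp = 0`
for all `i` with `λ̄_i > 0`, which turns the second condition into the one on `H_J ∩ H̃_I`.
Farkas' lemma comes from separating a point from a closed cone; a finitely generated cone is
closed because, by the conic Carathéodory theorem, it is a finite union of images of orthants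
under injective linear maps.
-/

open Function Filter Topology Finset

section ConicCombination

variable {ι V : Type*} [Fintype ι] [AddCommGroup V] [Module ℝ V]

lemma mem_hull_range_iff {v : ι → V} {x : V} :
    x ∈ PointedCone.hull ℝ (Set.range v) ↔ ∃ μ : ι → ℝ, 0 ≤ μ ∧ ∑ i, μ i • v i = x := by
  rw [Submodule.mem_span_range_iff_exists_fun]
  constructor
  · rintro ⟨c, rfl⟩
    exact ⟨fun i => c i, fun i => (c i).2, rfl⟩
  · rintro ⟨μ, hμ, rfl⟩
    exact ⟨fun i => ⟨μ i, hμ i⟩, rfl⟩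

lemma exists_nonneg_sum_smul_eq_support_ssubset (v : ι → V) {μ g : ι → ℝ} (hμ : 0 ≤ μ)
    (hg : ∑ i, g i • v i = 0) (hgμ : support g ⊆ support μ) {j : ι} (hj : 0 < g j) :
    ∃ ν : ι → ℝ, 0 ≤ ν ∧ ∑ i, ν i • v i = ∑ i, μ i • v i ∧ support ν ⊂ support μ := by
  classical
  -- ratio test: `t` below is the largest step with `μ - t • g ≥ 0`
  obtain ⟨i₀, hi₀, hmin⟩ := (univ.filter (0 < g ·)).exists_min_image (fun i => μ i / g i)
    ⟨j, by simpa using hj⟩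
  have hgi₀ : 0 < g i₀ := (mem_filter.mp hi₀).2
  set t := μ i₀ / g i₀
  have ht : 0 ≤ t := div_nonneg (hμ i₀) hgi₀.le
  have hle : ∀ i, t * g i ≤ μ i := fun i => by
    rcases le_or_gt (g i) 0 with hgi | hgi
    · exact (mul_nonpos_of_nonneg_of_nonpos ht hgi).trans (hμ i)
    · exact (le_div_iff₀ hgi).mp (hmin i (by simpa using hgi))
  refine ⟨μ - t • g, fun i => by simpa using hle i, ?_, fun i hi => ?_, fun hsub => ?_⟩
  · simp [sub_smul, mul_smul, sum_sub_distrib, ← smul_sum, hg]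
  · by_contra hμi
    have hgi : g i = 0 := notMem_support.mp (mt (@hgμ i) hμi)
    exact hi (by simp [notMem_support.mp hμi, hgi])
  · exact hsub (hgμ hgi₀.ne') (by simp [t, div_mul_cancel₀ _ hgi₀.ne'])

theorem exists_nonneg_sum_smul_eq_linearIndepOn_support (v : ι → V) {μ : ι → ℝ} (hμ : 0 ≤ μ) :
    ∃ ν : ι → ℝ, 0 ≤ ν ∧ ∑ i, ν i • v i = ∑ i, μ i • v i ∧ LinearIndepOn ℝ v (support ν) := by
  classical
  obtain ⟨ν, ⟨hν, hνμ⟩, hmin⟩ := (measure fun ν : ι → ℝ => (support ν).ncard).wf.has_min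
    {ν | 0 ≤ ν ∧ ∑ i, ν i • v i = ∑ i, μ i • v i} ⟨μ, hμ, rfl⟩
  refine ⟨ν, hν, hνμ, ?_⟩
  by_contra hdep
  obtain ⟨t, g, hts, hg, j, hjt, hgj⟩ : ∃ (t : Finset ι) (g : ι → ℝ), (t : Set ι) ⊆ support ν ∧
      ∑ i ∈ t, g i • v i = 0 ∧ ∃ j ∈ t, g j ≠ 0 := by
    simpa [linearIndepOn_iff'] using hdep
  -- scaling by `g j` makes the relation positive at `j`
  set g' : ι → ℝ := fun i => if i ∈ t then g j * g i else 0
  have hg' : ∑ i, g' i • v i = 0 := by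
    simp [g', ite_smul, mul_smul, ← smul_sum, hg]
  have hg'ν : support g' ⊆ support ν := fun i hi => hts (by_contra fun h => hi (if_neg h))
  obtain ⟨ν', hν', hν'μ, hlt⟩ :=
    exists_nonneg_sum_smul_eq_support_ssubset v hν hg' hg'ν (j := j) (by simpa [g', hjt])
  exact hmin ν' ⟨hν', hν'μ.trans hνμ⟩ (Set.ncard_lt_ncard hlt (Set.toFinite _))

variable [TopologicalSpace V] [IsTopologicalAddGroup V] [ContinuousSMul ℝ V] [T2Space V]

lemma LinearIndependent.isClosed_hull_range {v : ι → V} (hv : LinearIndependent ℝ v) :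
    IsClosed (PointedCone.hull ℝ (Set.range v) : Set V) := by
  have hinj : LinearMap.ker (Fintype.linearCombination ℝ v) = ⊥ :=
    LinearMap.ker_eq_bot.mpr (linearIndependent_iff_injective_fintypeLinearCombination.mp hv)
  have : (PointedCone.hull ℝ (Set.range v) : Set V) =
      Fintype.linearCombination ℝ v '' Set.Ici 0 := by
    ext x
    simp [mem_hull_range_iff, Fintype.linearCombination_apply]
  rw [this]
  exact (LinearMap.isClosedEmbedding_of_injective hinj).isClosedMap _ isClosed_Ici

theorem isClosed_hull_range (v : ι → V) :
    IsClosed (PointedCone.hull ℝ (Set.range v) : Set V) := by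
  classical
  have : (PointedCone.hull ℝ (Set.range v) : Set V) = ⋃ s : {s : Set ι // LinearIndepOn ℝ v s},
      PointedCone.hull ℝ (Set.range fun i : s.1 => v i) := by
    refine subset_antisymm (fun x hx => ?_) (Set.iUnion_subset fun s => Submodule.span_mono ?_)
    · obtain ⟨μ, hμ, rfl⟩ := mem_hull_range_iff.mp hx
      obtain ⟨ν, hν, hνμ, hind⟩ := exists_nonneg_sum_smul_eq_linearIndepOn_support v hμ
      refine Set.mem_iUnion.mpr
        ⟨⟨_, hind⟩, mem_hull_range_iff.mpr ⟨fun i => ν i, fun i => hν i, ?_⟩⟩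
      rw [← hνμ]
      exact (Finset.sum_congr_set _ _ _ (fun _ _ => rfl) (fun i hi => by simp_all)).symm
    · exact Set.range_comp_subset_range _ _
  rw [this]
  exact isClosed_iUnion_of_finite fun s => s.2.isClosed_hull_range

theorem exists_nonneg_sum_smul_eq_of_forall_strongDual [LocallyConvexSpace ℝ V]
    [FiniteDimensional ℝ V] (v : ι → V) {c : V}
    (h : ∀ f : StrongDual ℝ V, (∀ i, 0 ≤ f (v i)) → 0 ≤ f c) :
    ∃ μ : ι → ℝ, 0 ≤ μ ∧ ∑ i, μ i • v i = c := by
  rw [← mem_hull_range_iff]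
  by_contra hc
  obtain ⟨f, hf, hfc⟩ := ProperCone.hyperplane_separation_point
    ⟨PointedCone.hull ℝ (Set.range v), isClosed_hull_range v⟩ hc
  exact hfc.not_ge (h f fun i => hf _ (PointedCone.subset_hull (Set.mem_range_self i)))

end ConicCombination

theorem Matrix.exists_nonneg_vecMul_eq_of_forall_dotProduct {m n : Type*} [Fintype m] [Fintype n]
    (B : Matrix m n ℝ) (s : Set m) {c : n → ℝ}
    (h : ∀ p, (∀ i ∈ s, (B *ᵥ p) i ≤ 0) → c ⬝ᵥ p ≤ 0) :
    ∃ μ : m → ℝ, 0 ≤ μ ∧ (∀ i ∉ s, μ i = 0) ∧ μ ᵥ* B = c := by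
  classical
  obtain ⟨μ, hμ, hμc⟩ := exists_nonneg_sum_smul_eq_of_forall_strongDual
      (s.indicator fun i => B i) (c := c) fun f hf => by
    set p : n → ℝ := fun j => f fun k => if j = k then 1 else 0
    have hfp : ∀ y, f y = y ⬝ᵥ p := LinearMap.pi_apply_eq_sum_univ (f : (n → ℝ) →ₗ[ℝ] ℝ)
    have hBp : ∀ i ∈ s, (B *ᵥ -p) i ≤ 0 := fun i hi => by
      simpa [Set.indicator_of_mem hi, hfp, mulVec, dotProduct_comm] using hf i
    simpa [hfp] using h _ hBp
  refine ⟨s.indicator μ, Set.indicator_nonneg fun i _ => hμ i,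
    fun i hi => Set.indicator_of_notMem hi μ, ?_⟩
  rw [vecMul_eq_sum, ← hμc]
  refine sum_congr rfl fun i _ => ?_
  by_cases hi : i ∈ s <;> simp [hi]

lemma nonneg_and_pos_of_eventually_pos_add_mul {a c : ℝ}
    (h : ∀ᶠ t in 𝓝[>] (0 : ℝ), 0 < a + t * c) : 0 ≤ a ∧ (a = 0 → 0 < c) := by
  refine ⟨ge_of_tendsto ?_ (h.mono fun t ht => ht.le), fun ha => ?_⟩
  · have : Continuous fun t : ℝ => a + t * c := by fun_prop
    simpa using (this.tendsto 0).mono_left nhdsWithin_le_nhds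
  · obtain ⟨t, ht, htpos⟩ := (h.and self_mem_nhdsWithin).exists
    rw [ha, zero_add] at ht
    exact pos_of_mul_pos_right ht (le_of_lt htpos)

lemma IsCompact.exists_pos_forall_pos_add_mul {X : Type*} [TopologicalSpace X] {K : Set X}
    (hK : IsCompact K) {g f : X → ℝ} (hg : Continuous g) (hf : Continuous f)
    (h : ∀ p ∈ K, 0 ≤ g p ∧ (g p = 0 → 0 < f p)) :
    ∃ ε > 0, ∀ p ∈ K, ∀ t ∈ Set.Ioo 0 ε, 0 < g p + t * f p := by
  have hgpos : ∀ p ∈ K ∩ {p | f p ≤ 0}, 0 < g p := fun p ⟨hpK, hfp⟩ =>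
    (h p hpK).1.lt_of_ne fun hgp => ((h p hpK).2 hgp.symm).not_ge hfp
  obtain ⟨δ, hδ, hgδ⟩ := (hK.inter_right (isClosed_le hf continuous_const)).exists_forall_le'
    hg.continuousOn hgpos
  obtain ⟨M, hM⟩ := hK.bddBelow_image hf.continuousOn
  -- where `f p ≤ 0`: `g p ≥ δ` and `t * f p ≥ -t * |M| > -δ`
  refine ⟨δ / (|M| + 1), by positivity, fun p hpK t ⟨ht, htε⟩ => ?_⟩
  rcases lt_or_ge 0 (f p) with hfp | hfp
  · nlinarith [(h p hpK).1]
  · have hMf : M ≤ f p := hM ⟨p, hpK, rfl⟩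
    rw [lt_div_iff₀ (by positivity)] at htε
    nlinarith [hgδ p ⟨hpK, hfp⟩, neg_abs_le M]

section Polyhedron

variable {m n : Type*} [Fintype n] (A : Matrix m n ℝ) (b : m → ℝ)

def feasibleDirections (x : n → ℝ) : Set (n → ℝ) :=
  {p | ∀ i, (A *ᵥ x) i = b i → (A *ᵥ p) i ≤ 0}

variable {A b}

lemma isClosed_feasibleDirections (x : n → ℝ) : IsClosed (feasibleDirections A b x) := by
  simp only [feasibleDirections, Set.ofPred_forall]
  exact isClosed_iInter fun i => isClosed_iInter fun _ => isClosed_le (by fun_prop) continuous_const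

lemma smul_sub_mem_feasibleDirections {x y : n → ℝ} (hy : A *ᵥ y ≤ b) {t : ℝ} (ht : 0 ≤ t) :
    t • (y - x) ∈ feasibleDirections A b x := fun i hi => by
  simpa [mulVec_smul, mulVec_sub, hi] using
    mul_nonpos_of_nonneg_of_nonpos ht (sub_nonpos.mpr (hy i))

lemma eventually_mulVec_add_smul_le [Finite m] {x p : n → ℝ} (hx : A *ᵥ x ≤ b)
    (hp : p ∈ feasibleDirections A b x) : ∀ᶠ t in 𝓝[>] (0 : ℝ), A *ᵥ (x + t • p) ≤ b := by
  refine eventually_all.mpr fun i => ?_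
  simp only [mulVec_add, mulVec_smul, Pi.add_apply, Pi.smul_apply, smul_eq_mul]
  rcases (hx i).lt_or_eq with hlt | heq
  · have : ContinuousAt (fun t : ℝ => (A *ᵥ x) i + t * (A *ᵥ p) i) 0 := by fun_prop
    exact (this.eventually_lt continuousAt_const (by simpa using hlt)).filter_mono
      nhdsWithin_le_nhds |>.mono fun t ht => ht.le
  · filter_upwards [self_mem_nhdsWithin] with t (ht : 0 < t)
    nlinarith [hp i heq]

end Polyhedron

section Multipliers

variable {ι : Type*} {u w : ι → ℝ}

lemma mul_nonpos_of_pos_imp_nonpos (hw : 0 ≤ w) (hu : ∀ i, 0 < w i → u i ≤ 0) (i : ι) :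
    u i * w i ≤ 0 := by
  rcases (show 0 ≤ w i from hw i).eq_or_lt with hi | hi
  · rw [← hi, mul_zero]
  · exact mul_nonpos_of_nonpos_of_nonneg (hu i hi) hi.le

lemma dotProduct_nonpos_of_pos_imp_nonpos [Fintype ι] (hw : 0 ≤ w)
    (hu : ∀ i, 0 < w i → u i ≤ 0) : u ⬝ᵥ w ≤ 0 :=
  sum_nonpos fun i _ => mul_nonpos_of_pos_imp_nonpos hw hu i

lemma dotProduct_eq_zero_iff_of_pos_imp_nonpos [Fintype ι] (hw : 0 ≤ w)
    (hu : ∀ i, 0 < w i → u i ≤ 0) : u ⬝ᵥ w = 0 ↔ ∀ i, 0 < w i → u i = 0 := by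
  rw [dotProduct, sum_eq_zero_iff_of_nonpos fun i _ => mul_nonpos_of_pos_imp_nonpos hw hu i]
  refine forall_congr' fun i => ?_
  rcases (show 0 ≤ w i from hw i).eq_or_lt with hi | hi
  · simp [← hi]
  · simp [hi, hi.ne']

end Multipliers

section KKT

variable {m n : Type*} [Fintype m] [Fintype n] {A : Matrix m n ℝ} {b : m → ℝ}

lemma dotProduct_neg_transpose_mulVec (A : Matrix m n ℝ) (p : n → ℝ) (lam : m → ℝ) :
    p ⬝ᵥ -(Aᵀ *ᵥ lam) = -((A *ᵥ p) ⬝ᵥ lam) := by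
  rw [dotProduct_neg, dotProduct_mulVec, vecMul_transpose]

theorem exists_kkt_multiplier {x c : n → ℝ}
    (h : ∀ p ∈ feasibleDirections A b x, 0 ≤ p ⬝ᵥ c) :
    ∃ lam : m → ℝ, 0 ≤ lam ∧ (∀ i, (A *ᵥ x) i ≠ b i → lam i = 0) ∧ c = -(Aᵀ *ᵥ lam) := by
  obtain ⟨lam, hlam, hact, hc⟩ := A.exists_nonneg_vecMul_eq_of_forall_dotProduct
    {i | (A *ᵥ x) i = b i} (c := -c) fun p hp => by
      simpa [dotProduct_comm] using h p hp
  exact ⟨lam, hlam, hact, by rw [mulVec_transpose, hc, neg_neg]⟩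

theorem directional_conditions_iff_kkt {Q : Matrix n n ℝ} {x c : n → ℝ} (hx : A *ᵥ x ≤ b) :
    (∀ p ∈ feasibleDirections A b x, p ≠ 0 → 0 ≤ p ⬝ᵥ c ∧ (p ⬝ᵥ c = 0 → 0 < p ⬝ᵥ (Q *ᵥ p))) ↔
      ∃ lam : m → ℝ, 0 ≤ lam ∧ c = -(Aᵀ *ᵥ lam) ∧ (A *ᵥ x - b) ⬝ᵥ lam = 0 ∧
        ∀ p : n → ℝ, p ≠ 0 → (∀ i, 0 < lam i → (A *ᵥ p) i = 0) →
          (∀ i, (A *ᵥ x) i = b i → (A *ᵥ p) i ≤ 0) → 0 < p ⬝ᵥ (Q *ᵥ p) := by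
  have hslack : ∀ lam : m → ℝ, 0 ≤ lam →
      ((A *ᵥ x - b) ⬝ᵥ lam = 0 ↔ ∀ i, 0 < lam i → (A *ᵥ x) i = b i) := fun lam hlam =>
    (dotProduct_eq_zero_iff_of_pos_imp_nonpos (u := A *ᵥ x - b) hlam fun i _ =>
      sub_nonpos.mpr (hx i)).trans (by simp only [Pi.sub_apply, sub_eq_zero])
  constructor
  · intro h
    obtain ⟨lam, hlam, hact, hc⟩ := exists_kkt_multiplier (b := b) (x := x) (c := c) fun p hp =>
      (eq_or_ne p 0).elim (fun hp0 => by simp [hp0]) fun hp0 => (h p hp hp0).1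
    refine ⟨lam, hlam, hc, (hslack lam hlam).mpr fun i hi => by_contra fun hne =>
      hi.ne' (hact i hne), fun p hp0 hJ hI => (h p hI hp0).2 ?_⟩
    rw [hc, dotProduct_neg_transpose_mulVec, neg_eq_zero]
    exact (dotProduct_eq_zero_iff_of_pos_imp_nonpos hlam fun i hi => (hJ i hi).le).mpr hJ
  · rintro ⟨lam, hlam, rfl, hcompl, hsecond⟩ p hp hp0
    have hu : ∀ i, 0 < lam i → (A *ᵥ p) i ≤ 0 := fun i hi => hp i ((hslack lam hlam).mp hcompl i hi)
    rw [dotProduct_neg_transpose_mulVec, neg_nonneg, neg_eq_zero,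
      dotProduct_eq_zero_iff_of_pos_imp_nonpos hlam hu]
    exact ⟨dotProduct_nonpos_of_pos_imp_nonpos hlam hu, fun hJ => hsecond p hp0 hJ hp⟩

end KKT

section LocalUniqueness

variable {n m : ℕ} {Q : Matrix (Fin n) (Fin n) ℝ} (d : Fin n → ℝ) {A : Matrix (Fin m) (Fin n) ℝ}
  {b : Fin m → ℝ} {x : Fin n → ℝ}

lemma Phi_add_smul (hQ : Q.IsSymm) (x p : Fin n → ℝ) (t : ℝ) :
    Phi Q d (x + t • p) = Phi Q d x + t * (2 * (p ⬝ᵥ (Q *ᵥ x + d)) + t * (p ⬝ᵥ (Q *ᵥ p))) := by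
  have hsymm : x ⬝ᵥ (Q *ᵥ p) = p ⬝ᵥ (Q *ᵥ x) := by
    rw [dotProduct_mulVec, ← mulVec_transpose, hQ.eq, dotProduct_comm]
  simp only [Phi, mulVec_add, mulVec_smul, dotProduct_add, add_dotProduct, dotProduct_smul,
    smul_dotProduct, smul_eq_mul, hsymm, dotProduct_comm d p]
  ring

theorem directional_conditions_of_locallyUnique (hQ : Q.IsSymm) (hx : A *ᵥ x ≤ b)
    (hmin : ∃ ε : ℝ, 0 < ε ∧ ∀ y : Fin n → ℝ, A *ᵥ y ≤ b → ‖y - x‖ < ε → y ≠ x →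
      Phi Q d x < Phi Q d y) :
    ∀ p ∈ feasibleDirections A b x, p ≠ 0 →
      0 ≤ p ⬝ᵥ (Q *ᵥ x + d) ∧ (p ⬝ᵥ (Q *ᵥ x + d) = 0 → 0 < p ⬝ᵥ (Q *ᵥ p)) := by
  obtain ⟨ε, hε, hmin⟩ := hmin
  intro p hp hp0
  have hp0' : 0 < ‖p‖ := norm_pos_iff.mpr hp0
  have hev : ∀ᶠ t in 𝓝[>] (0 : ℝ),
      0 < 2 * (p ⬝ᵥ (Q *ᵥ x + d)) + t * (p ⬝ᵥ (Q *ᵥ p)) := by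
    filter_upwards [eventually_mulVec_add_smul_le hx hp, Ioo_mem_nhdsGT (div_pos hε hp0')]
      with t hfeas ⟨ht, htε⟩
    have hlt := hmin (x + t • p) hfeas
      (by rwa [add_sub_cancel_left, norm_smul, Real.norm_of_nonneg ht.le, ← lt_div_iff₀ hp0'])
      (by simpa [ht.ne'] using hp0)
    rw [Phi_add_smul d hQ] at hlt
    exact pos_of_mul_pos_right (by linarith) ht.le
  obtain ⟨hg, hf⟩ := nonneg_and_pos_of_eventually_pos_add_mul hev
  exact ⟨by linarith, fun h0 => hf (by rw [h0, mul_zero])⟩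

theorem locallyUnique_of_directional_conditions (hQ : Q.IsSymm)
    (h : ∀ p ∈ feasibleDirections A b x, p ≠ 0 →
      0 ≤ p ⬝ᵥ (Q *ᵥ x + d) ∧ (p ⬝ᵥ (Q *ᵥ x + d) = 0 → 0 < p ⬝ᵥ (Q *ᵥ p))) :
    ∃ ε : ℝ, 0 < ε ∧ ∀ y : Fin n → ℝ, A *ᵥ y ≤ b → ‖y - x‖ < ε → y ≠ x →
      Phi Q d x < Phi Q d y := by
  obtain ⟨ε, hε, hpos⟩ := ((isCompact_sphere (0 : Fin n → ℝ) 1).inter_right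
    (isClosed_feasibleDirections (A := A) (b := b) x)).exists_pos_forall_pos_add_mul
    (g := fun p => 2 * (p ⬝ᵥ (Q *ᵥ x + d))) (f := fun p => p ⬝ᵥ (Q *ᵥ p)) (by fun_prop)
    (by fun_prop) fun p ⟨hp1, hp⟩ => by
      obtain ⟨hg, hf⟩ := h p hp (ne_zero_of_mem_sphere one_ne_zero ⟨p, hp1⟩)
      exact ⟨by positivity, fun h0 => hf (by linarith)⟩
  refine ⟨ε, hε, fun y hy hyε hyx => ?_⟩
  set t := ‖y - x‖
  have ht : 0 < t := norm_pos_iff.mpr (sub_ne_zero.mpr hyx)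
  have hp1 : t⁻¹ • (y - x) ∈ Metric.sphere 0 1 := by simp [t, norm_smul, ht.ne']
  have hpos := hpos _ ⟨hp1, smul_sub_mem_feasibleDirections hy (inv_nonneg.mpr ht.le)⟩ t ⟨ht, hyε⟩
  have hy_eq : y = x + t • t⁻¹ • (y - x) := by
    rw [smul_smul, mul_inv_cancel₀ ht.ne', one_smul, add_sub_cancel]
  rw [hy_eq, Phi_add_smul d hQ]
  linarith [mul_pos ht hpos]

end LocalUniqueness

/-- second-order characterization of locally unique solutions.
`x̄` is a locally unique solution of the QP iff `x̄` is feasible, satisfies the KKT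
conditions with some multiplier `λ̄ ≥ 0`, and `pᵀQp > 0` for every nonzero `p` in
the cone `{p : a_iᵀp = 0 ∀ i ∈ J_λ̄, a_iᵀp ≤ 0 ∀ i ∈ I_x̄}`. -/
theorem locally_unique_iff_second_order {n m : ℕ}
    (Q : Matrix (Fin n) (Fin n) ℝ) (hQ : Q.IsSymm)
    (d : Fin n → ℝ) (A : Matrix (Fin m) (Fin n) ℝ) (b : Fin m → ℝ)
    (xbar : Fin n → ℝ) :
    (A *ᵥ xbar ≤ b ∧ ∃ ε : ℝ, 0 < ε ∧ ∀ x : Fin n → ℝ, A *ᵥ x ≤ b →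
        ‖x - xbar‖ < ε → x ≠ xbar → Phi Q d xbar < Phi Q d x) ↔
      (A *ᵥ xbar ≤ b ∧ ∃ lam : Fin m → ℝ, 0 ≤ lam ∧
        Q *ᵥ xbar + d = -(Aᵀ *ᵥ lam) ∧ (A *ᵥ xbar - b) ⬝ᵥ lam = 0 ∧
        ∀ p : Fin n → ℝ, p ≠ 0 → (∀ i : Fin m, 0 < lam i → (A *ᵥ p) i = 0) →
          (∀ i : Fin m, (A *ᵥ xbar) i = b i → (A *ᵥ p) i ≤ 0) →
          0 < p ⬝ᵥ (Q *ᵥ p)) :=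
  and_congr_right fun hx =>
    (Iff.intro (directional_conditions_of_locallyUnique d hQ hx)
      (locallyUnique_of_directional_conditions d hQ)).trans (directional_conditions_iff_kkt hx)
end

section
/- Let Q be a symmetric n×n real matrix, d ∈ ℝⁿ, A ∈ ℝ^{m×n}, b ∈ ℝᵐ, with F = {x : Ax ≤ b} bounded. For I ⊆ {1,…,m} let Φ*_I := inf{Φ(x) : x ∈ F, a_iᵀx = b_i for all i ∈ I}. Then there is NO sequence (x_k)_{k≥0} of points of F such that for every k ≥ 0: Φ(x_{k+1}) ≤ Φ(x_k), and either (i) pᵀQp > 0 for all nonzero p with a_iᵀp = 0 for all i ∈ I_{x_k}, and Φ(x_{k+1}) < Φ*_{I_{x_k}}, or (ii) there exists a nonzero p with a_iᵀp = 0 for all i ∈ I_{x_k} and pᵀQp ≤ 0, and I_{x_k} is a proper subset of I_{x_{k+1}}. (This is the finite-termination theorem for the finite-terminating generalized mountain climbing algorithm.) -/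
/-!
The objective values along the sequence never increase, and a type-(i) step at `x_k` drops
strictly below `Φ*_{I_{x_k}}`, which is a lower bound for `Φ` at every later point whose active
set contains `I_{x_k}` (the infimum is finite because `F` is compact). So no active set of a
type-(i) step is contained in a later active set. In particular the type-(i) steps have pairwise
distinct active sets, so there are finitely many of them; afterwards every step is of type (ii)
and the active sets strictly increase forever, which is impossible for subsets of `{1, …, m}`.
-/

open Matrix

/-- `Φ*_I` : the infimum of `Φ` over the feasible points whose active set contains
the active set of `x̂`, i.e. over `{x ∈ F : a_iᵀx = b_i ∀ i ∈ I_x̂}`. -/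
noncomputable def PhiStar {n m : ℕ} (Q : Matrix (Fin n) (Fin n) ℝ) (d : Fin n → ℝ)
    (A : Matrix (Fin m) (Fin n) ℝ) (b : Fin m → ℝ) (xhat : Fin n → ℝ) : ℝ :=
  sInf {v : ℝ | ∃ y : Fin n → ℝ, A *ᵥ y ≤ b ∧
    (∀ i : Fin m, (A *ᵥ xhat) i = b i → (A *ᵥ y) i = b i) ∧ v = Phi Q d y}

theorem Finite.exists_lt_le_of_forall_or_lt_succ {α : Type*} [Preorder α] [Finite α]
    (S : ℕ → α) {P : ℕ → Prop} (hstep : ∀ k, P k ∨ S k < S (k + 1)) :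
    ∃ k j, k < j ∧ P k ∧ S k ≤ S j := by
  by_cases hP : {k | P k}.Infinite
  · obtain ⟨k, hk, j, -, hkj, hS⟩ :=
      hP.exists_lt_map_eq_of_mapsTo (Set.mapsTo_univ S _) Set.finite_univ
    exact ⟨k, j, hkj, hk, hS.le⟩
  · obtain ⟨K, hK⟩ := (Set.not_infinite.mp hP).bddAbove
    have hmono : StrictMono fun i => S (K + 1 + i) := by
      refine strictMono_nat_of_lt_succ fun i => ?_
      have hnP : ¬ P (K + 1 + i) := fun h => by linarith [hK h]
      exact (hstep _).resolve_left hnP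
    exact (not_injective_infinite_finite _ hmono.injective).elim

def activeSet {ι κ : Type*} [Fintype κ] (A : Matrix ι κ ℝ) (b : ι → ℝ) (x : κ → ℝ) :
    Set ι :=
  {i | (A *ᵥ x) i = b i}

theorem isCompact_polyhedron_of_isBounded {ι κ : Type*} [Fintype κ] {A : Matrix ι κ ℝ}
    {b : ι → ℝ} (hbdd : Bornology.IsBounded {x : κ → ℝ | A *ᵥ x ≤ b}) :
    IsCompact {x : κ → ℝ | A *ᵥ x ≤ b} :=
  Metric.isCompact_of_isClosed_isBounded
    (isClosed_le (continuous_const.matrix_mulVec continuous_id) continuous_const) hbdd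

theorem continuous_Phi {n : ℕ} (Q : Matrix (Fin n) (Fin n) ℝ) (d : Fin n → ℝ) :
    Continuous (Phi Q d) :=
  (continuous_id.dotProduct (continuous_const.matrix_mulVec continuous_id)).add
    (continuous_const.mul (continuous_const.dotProduct continuous_id))

theorem PhiStar_le_Phi {n m : ℕ} (Q : Matrix (Fin n) (Fin n) ℝ) (d : Fin n → ℝ)
    {A : Matrix (Fin m) (Fin n) ℝ} {b : Fin m → ℝ}
    (hbdd : Bornology.IsBounded {x : Fin n → ℝ | A *ᵥ x ≤ b}) {xhat y : Fin n → ℝ}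
    (hy : A *ᵥ y ≤ b) (hsub : activeSet A b xhat ⊆ activeSet A b y) :
    PhiStar Q d A b xhat ≤ Phi Q d y := by
  refine csInf_le ?_ ⟨y, hy, fun i hi => hsub hi, rfl⟩
  refine ((isCompact_polyhedron_of_isBounded hbdd).bddBelow_image
    (continuous_Phi Q d).continuousOn).mono ?_
  rintro v ⟨z, hz, -, rfl⟩
  exact ⟨z, hz, rfl⟩

theorem gmc_finite_termination_general {n m : ℕ}
    (Q : Matrix (Fin n) (Fin n) ℝ)
    (d : Fin n → ℝ) (A : Matrix (Fin m) (Fin n) ℝ) (b : Fin m → ℝ)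
    (hbdd : Bornology.IsBounded {x : Fin n → ℝ | A *ᵥ x ≤ b}) :
    ¬ ∃ x : ℕ → Fin n → ℝ,
      (∀ k, A *ᵥ x k ≤ b) ∧
      (∀ k, Phi Q d (x (k + 1)) ≤ Phi Q d (x k)) ∧
      (∀ k,
        ((∀ p : Fin n → ℝ, p ≠ 0 →
            (∀ i : Fin m, (A *ᵥ x k) i = b i → (A *ᵥ p) i = 0) →
            0 < p ⬝ᵥ (Q *ᵥ p)) ∧
          Phi Q d (x (k + 1)) < PhiStar Q d A b (x k)) ∨
        ((∃ p : Fin n → ℝ, p ≠ 0 ∧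
            (∀ i : Fin m, (A *ᵥ x k) i = b i → (A *ᵥ p) i = 0) ∧
            p ⬝ᵥ (Q *ᵥ p) ≤ 0) ∧
          {i : Fin m | (A *ᵥ x k) i = b i} ⊂
            {i : Fin m | (A *ᵥ x (k + 1)) i = b i})) := by
  rintro ⟨x, hfeas, hdecr, hstep⟩
  obtain ⟨k, j, hkj, hdrop, hsub⟩ :=
    Finite.exists_lt_le_of_forall_or_lt_succ (fun k => activeSet A b (x k))
      (P := fun k => Phi Q d (x (k + 1)) < PhiStar Q d A b (x k))
      fun k => (hstep k).imp And.right And.right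
  have hstar : PhiStar Q d A b (x k) ≤ Phi Q d (x j) := PhiStar_le_Phi Q d hbdd (hfeas j) hsub
  have hlater : Phi Q d (x j) ≤ Phi Q d (x (k + 1)) :=
    antitone_nat_of_succ_le (f := fun k => Phi Q d (x k)) hdecr hkj
  exact (hdrop.trans_le hstar).not_ge hlater

/-- Theorem `thm:gmcfinite`, finite termination of the
finite-terminating GMC algorithm. With `F = {x : Ax ≤ b}` bounded, there is no
infinite sequence of feasible points with nonincreasing objective values in which
every step is either
(i) a step at a point where `Q` is positive definite on the null space of the
active constraints and whose successor has objective value strictly below `Φ*` of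
the current active set, or
(ii) a step at a point where `Q` is not positive definite on that null space and
whose successor has a strictly larger active set. -/
theorem gmc_finite_termination {n m : ℕ}
    (Q : Matrix (Fin n) (Fin n) ℝ) (hQ : Q.IsSymm)
    (d : Fin n → ℝ) (A : Matrix (Fin m) (Fin n) ℝ) (b : Fin m → ℝ)
    (hbdd : Bornology.IsBounded {x : Fin n → ℝ | A *ᵥ x ≤ b}) :
    ¬ ∃ x : ℕ → Fin n → ℝ,
      (∀ k, A *ᵥ x k ≤ b) ∧
      (∀ k, Phi Q d (x (k + 1)) ≤ Phi Q d (x k)) ∧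
      (∀ k,
        ((∀ p : Fin n → ℝ, p ≠ 0 →
            (∀ i : Fin m, (A *ᵥ x k) i = b i → (A *ᵥ p) i = 0) →
            0 < p ⬝ᵥ (Q *ᵥ p)) ∧
          Phi Q d (x (k + 1)) < PhiStar Q d A b (x k)) ∨
        ((∃ p : Fin n → ℝ, p ≠ 0 ∧
            (∀ i : Fin m, (A *ᵥ x k) i = b i → (A *ᵥ p) i = 0) ∧
            p ⬝ᵥ (Q *ᵥ p) ≤ 0) ∧
          {i : Fin m | (A *ᵥ x k) i = b i} ⊂
            {i : Fin m | (A *ᵥ x (k + 1)) i = b i})) :=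
  gmc_finite_termination_general Q d A b hbdd
end
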